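/- (Kernel coercivity implies uniqueness for a saddle point system) Let X, Q be real normed spaces, A : X × X → ℝ a symmetric bounded bilinear form, B : X × Q → ℝ a bounded bilinear form. Suppose A is coercive on X₀ := { x ∈ X : ∀q ∈ Q, B(x,q) = 0 } with constant γ > 0, and B satisfies inf_{q≠0} sup_{x≠0} B(x,q)/(‖x‖‖q‖) ≥ β > 0. If (x₁, p₁) and (x₂, p₂) both satisfy A(xᵢ, w) + B(w, pᵢ) = F(w) and B(xᵢ, q) = G(q) for all w ∈ X, q ∈ Q, then x₁ = x₂ and p₁ = p₂. -/
import Mathlib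

/-- Uniqueness part of Brezzi's theorem (Proposition 2.1): if `A` is symmetric,
bounded, coercive on the kernel `X₀` of `B`, and `B` satisfies the inf-sup
condition, then the saddle point system has at most one solution. -/
theorem stmt_15 {X Q : Type*} [NormedAddCommGroup X] [NormedSpace ℝ X]
    [NormedAddCommGroup Q] [NormedSpace ℝ Q]
    (A : X →ₗ[ℝ] X →ₗ[ℝ] ℝ) (B : X →ₗ[ℝ] Q →ₗ[ℝ] ℝ)
    (CA : ℝ) (hAbd : ∀ x w, |A x w| ≤ CA * ‖x‖ * ‖w‖)
    (CB : ℝ) (hBbd : ∀ x q, |B x q| ≤ CB * ‖x‖ * ‖q‖)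
    (hAsymm : ∀ x w, A x w = A w x)
    (γ : ℝ) (hγ : 0 < γ)
    (hcoer : ∀ x : X, (∀ q : Q, B x q = 0) → A x x ≥ γ * ‖x‖ ^ 2)
    (β : ℝ) (hβ : 0 < β)
    (hinfsup : ∀ q : Q, q ≠ 0 →
      β ≤ sSup {r : ℝ | ∃ x : X, x ≠ 0 ∧ r = B x q / (‖x‖ * ‖q‖)})
    (F : X →L[ℝ] ℝ) (G : Q →L[ℝ] ℝ)
    (x₁ x₂ : X) (p₁ p₂ : Q)
    (h₁ : (∀ w : X, A x₁ w + B w p₁ = F w) ∧ (∀ q : Q, B x₁ q = G q))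
    (h₂ : (∀ w : X, A x₂ w + B w p₂ = F w) ∧ (∀ q : Q, B x₂ q = G q)) :
    x₁ = x₂ ∧ p₁ = p₂ := by
  obtain ⟨h1a, h1b⟩ := h₁
  obtain ⟨h2a, h2b⟩ := h₂
  set u := x₁ - x₂ with hu
  set p := p₁ - p₂ with hp
  have hBu : ∀ q : Q, B u q = 0 := by
    intro q
    simp [hu, map_sub, h1b q, h2b q]
  have hAu : ∀ w : X, A u w + B w p = 0 := by
    intro w
    have := h1a w
    have := h2a w
    simp only [hu, hp, map_sub, LinearMap.sub_apply]
    linarith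
  have huu : A u u = 0 := by
    have h := hAu u
    rw [show B u p = 0 from hBu p] at h
    linarith
  have hux : u = 0 := by
    have h := hcoer u hBu
    rw [huu] at h
    have : ‖u‖ ^ 2 ≤ 0 := by nlinarith
    have : ‖u‖ = 0 := by nlinarith [sq_nonneg ‖u‖, norm_nonneg u]
    exact norm_eq_zero.mp this
  have hx : x₁ = x₂ := by rwa [sub_eq_zero] at hux
  have hBwp : ∀ w : X, B w p = 0 := by
    intro w
    have h := hAu w
    rw [hux] at h
    simp at h
    exact h
  have hpz : p = 0 := by
    by_contra hne
    have h := hinfsup p hne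
    have : sSup {r : ℝ | ∃ x : X, x ≠ 0 ∧ r = B x p / (‖x‖ * ‖p‖)} ≤ 0 := by
      apply Real.sSup_le
      · rintro r ⟨x, hx0, rfl⟩
        rw [hBwp x]
        simp
      · exact le_refl 0
    linarith
  exact ⟨hx, by rwa [sub_eq_zero] at hpz⟩
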